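/- Let I₁ be the modified Bessel function of the first kind of order one. Then: (i) for all 0 < x < y, e^{x−y}(x/y) < I₁(x)/I₁(y) < e^{x−y}(y/x)^{1/2}; (ii) for every x > 0, x/2 ≤ I₁(x) ≤ (x/2)·cosh(x); (iii) for every x > 0, 0 ≤ I₁'(x) ≤ I₁(x) + I₁(x)/x. -/

import Mathlib

/-!
With `I₀ = Σ (x/2)^{2k} / k!²` one has `I₀' = I₁` and `I₁' = I₀ - I₁/x`. The two bounds in (i)
say that `e^{-x} I₁(x) / x` decreases and `e^{-x} √x I₁(x)` increases on `(0, ∞)`; by the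
derivative formulas these are the inequalities `x I₀ < (x + 2) I₁` (which is also the upper
bound in (iii)) and `(2x + 1) I₁ < 2x I₀`.

The first is a comparison of power series: after the vanishing constant term, each term of
`x I₀ - 2 I₁` is at most the average of two consecutive terms of `x I₁`, by AM-GM. The second is
a barrier argument: at a zero of `W = 2x I₀ - (2x + 1) I₁` one finds `(2x + 1) W' = 3 I₀ > 0`, so
`W` cannot reach zero once it is positive, and near the origin `W > 0` follows from
`I₁ ≤ (x/2) cosh x`, the termwise comparison with the series of `cosh` that also gives (ii).
-/

open MeasureTheory Set

noncomputable def besselI1 (x : ℝ) : ℝ :=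
  ∑' k : ℕ, (1 / ((Nat.factorial k : ℝ) * (Nat.factorial (k + 1) : ℝ))) * (x / 2) ^ (2 * k + 1)

open Real
open scoped Nat

theorem hasDerivAt_tsum_of_forall_abs_le {u u' : ℕ → ℝ → ℝ} {b : ℝ → ℕ → ℝ}
    (hu : ∀ k y, HasDerivAt (u k) (u' k y) y) (hb : ∀ R, Summable (b R))
    (hu' : ∀ R k y, |y| ≤ R → |u' k y| ≤ b R k) {x : ℝ} (hx : Summable fun k ↦ u k x) :
    HasDerivAt (fun y ↦ ∑' k, u k y) (∑' k, u' k x) x := by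
  have hmem : x ∈ Ioo (-(|x| + 1)) (|x| + 1) := by
    constructor <;> linarith [neg_abs_le x, le_abs_self x]
  exact hasDerivAt_tsum_of_isPreconnected (hb (|x| + 1)) isOpen_Ioo
    (convex_Ioo _ _).isPreconnected (fun k y _ ↦ hu k y)
    (fun k y hy ↦ hu' _ k y (abs_le.2 ⟨hy.1.le, hy.2.le⟩)) hmem hx hmem

noncomputable def besselI0Term (k : ℕ) (x : ℝ) : ℝ :=
  1 / ((k ! : ℝ) * k !) * (x / 2) ^ (2 * k)

noncomputable def besselI1Term (k : ℕ) (x : ℝ) : ℝ :=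
  1 / ((k ! : ℝ) * (k + 1)!) * (x / 2) ^ (2 * k + 1)

noncomputable def besselI0 (x : ℝ) : ℝ :=
  ∑' k, besselI0Term k x

lemma besselI1_eq_tsum (x : ℝ) : besselI1 x = ∑' k, besselI1Term k x := rfl

lemma besselI0Term_zero (x : ℝ) : besselI0Term 0 x = 1 := by
  simp [besselI0Term]

lemma besselI0Term_nonneg (k : ℕ) (x : ℝ) : 0 ≤ besselI0Term k x := by
  rw [besselI0Term, pow_mul]
  positivity

lemma besselI1Term_nonneg (k : ℕ) {x : ℝ} (hx : 0 ≤ x) : 0 ≤ besselI1Term k x := by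
  rw [besselI1Term]
  positivity

lemma besselI1Term_eq (k : ℕ) (x : ℝ) :
    besselI1Term k x = x / (2 * k + 2) * besselI0Term k x := by
  rw [besselI1Term, besselI0Term, Nat.factorial_succ, pow_succ]
  push_cast
  field_simp

lemma besselI0Term_succ (k : ℕ) (x : ℝ) :
    besselI0Term (k + 1) x = (x / 2) ^ 2 / (k + 1) ^ 2 * besselI0Term k x := by
  rw [besselI0Term, besselI0Term, Nat.factorial_succ, mul_add, pow_add]
  push_cast
  field_simp

lemma abs_besselI0Term_le {R y : ℝ} (hy : |y| ≤ R) (k : ℕ) :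
    |besselI0Term k y| ≤ ((R / 2) ^ 2) ^ k / k ! := by
  have hk : (1 : ℝ) ≤ k ! := by exact_mod_cast k.factorial_pos
  have hsq : (y / 2) ^ 2 ≤ (R / 2) ^ 2 := by
    rw [sq_le_sq, abs_div, abs_div]
    exact div_le_div_of_nonneg_right (hy.trans (le_abs_self R)) (abs_nonneg 2)
  have hpow : ((y / 2) ^ 2) ^ k ≤ ((R / 2) ^ 2) ^ k := pow_le_pow_left₀ (sq_nonneg _) hsq k
  rw [abs_of_nonneg (besselI0Term_nonneg k y), besselI0Term, pow_mul, one_div_mul_eq_div]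
  calc ((y / 2) ^ 2) ^ k / (k ! * k !) ≤ ((R / 2) ^ 2) ^ k / (k ! * 1) := by
        gcongr
    _ = ((R / 2) ^ 2) ^ k / k ! := by rw [mul_one]

lemma abs_besselI1Term_le {R y : ℝ} (hy : |y| ≤ R) (k : ℕ) :
    |besselI1Term k y| ≤ R / 2 * (((R / 2) ^ 2) ^ k / k !) := by
  have hk : (2 : ℝ) ≤ 2 * k + 2 := by linarith [k.cast_nonneg (α := ℝ)]
  have hR : 0 ≤ R := (abs_nonneg y).trans hy
  rw [besselI1Term_eq, abs_mul, abs_div, abs_of_pos (by linarith : (0 : ℝ) < 2 * k + 2)]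
  calc |y| / (2 * k + 2) * |besselI0Term k y| ≤ R / 2 * |besselI0Term k y| := by gcongr
    _ ≤ R / 2 * (((R / 2) ^ 2) ^ k / k !) := by gcongr; exact abs_besselI0Term_le hy k

lemma summable_besselI0Term (x : ℝ) : Summable fun k ↦ besselI0Term k x :=
  .of_norm_bounded (summable_pow_div_factorial _) (abs_besselI0Term_le le_rfl)

lemma summable_besselI1Term (x : ℝ) : Summable fun k ↦ besselI1Term k x :=
  .of_norm_bounded ((summable_pow_div_factorial _).mul_left _) (abs_besselI1Term_le le_rfl)

lemma hasDerivAt_besselI0Term_succ (k : ℕ) (x : ℝ) :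
    HasDerivAt (besselI0Term (k + 1)) (besselI1Term k x) x := by
  have := (((hasDerivAt_id' x).div_const 2).pow (2 * (k + 1))).const_mul
    (1 / (((k + 1)! : ℝ) * (k + 1)!))
  refine this.congr_deriv ?_
  rw [besselI1Term, show 2 * (k + 1) - 1 = 2 * k + 1 by omega, Nat.factorial_succ]
  push_cast
  field_simp

lemma hasDerivAt_besselI1Term (k : ℕ) (x : ℝ) :
    HasDerivAt (besselI1Term k) ((2 * k + 1) / (2 * k + 2) * besselI0Term k x) x := by
  have := (((hasDerivAt_id' x).div_const 2).pow (2 * k + 1)).const_mul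
    (1 / ((k ! : ℝ) * (k + 1)!))
  refine this.congr_deriv ?_
  rw [besselI0Term, Nat.add_sub_cancel, Nat.factorial_succ]
  push_cast
  field_simp

lemma hasDerivAt_besselI0 (x : ℝ) : HasDerivAt besselI0 (besselI1 x) x := by
  have hshift : besselI0 = fun y ↦ 1 + ∑' k, besselI0Term (k + 1) y := by
    ext y
    rw [besselI0, (summable_besselI0Term y).tsum_eq_zero_add, besselI0Term_zero]
  rw [hshift]
  exact (hasDerivAt_tsum_of_forall_abs_le hasDerivAt_besselI0Term_succ
    (fun R ↦ (summable_pow_div_factorial _).mul_left (R / 2))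
    (fun _ k _ hy ↦ abs_besselI1Term_le hy k)
    ((summable_nat_add_iff (f := fun k ↦ besselI0Term k x) 1).2 (summable_besselI0Term x))).const_add 1

lemma hasDerivAt_besselI1 (x : ℝ) :
    HasDerivAt besselI1 (∑' k, (2 * k + 1) / (2 * k + 2) * besselI0Term k x) x := by
  rw [show besselI1 = fun y ↦ ∑' k, besselI1Term k y from rfl]
  refine hasDerivAt_tsum_of_forall_abs_le hasDerivAt_besselI1Term
    (fun R ↦ summable_pow_div_factorial ((R / 2) ^ 2)) (fun R k y hy ↦ ?_)
    (summable_besselI1Term x)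
  have hk : (0 : ℝ) ≤ k := k.cast_nonneg
  calc |(2 * k + 1) / (2 * k + 2) * besselI0Term k y| ≤ 1 * |besselI0Term k y| := by
        rw [abs_mul, abs_of_pos (by positivity)]
        gcongr
        rw [div_le_one (by positivity)]
        linarith
    _ ≤ ((R / 2) ^ 2) ^ k / k ! := by rw [one_mul]; exact abs_besselI0Term_le hy k

lemma hasDerivAt_besselI1_of_ne_zero {x : ℝ} (hx : x ≠ 0) :
    HasDerivAt besselI1 (besselI0 x - besselI1 x / x) x := by
  convert hasDerivAt_besselI1 x using 1
  rw [besselI0, besselI1_eq_tsum, ← tsum_div_const,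
    ← (summable_besselI0Term x).tsum_sub ((summable_besselI1Term x).div_const x)]
  congr 1 with k
  rw [besselI1Term_eq]
  have hk : (0 : ℝ) < 2 * k + 2 := by positivity
  field_simp
  ring

lemma deriv_besselI1_nonneg (x : ℝ) : 0 ≤ deriv besselI1 x := by
  rw [(hasDerivAt_besselI1 x).deriv]
  exact tsum_nonneg fun k ↦ mul_nonneg (by positivity) (besselI0Term_nonneg k x)

lemma one_le_besselI0 (x : ℝ) : 1 ≤ besselI0 x := by
  rw [besselI0]
  simpa [besselI0Term_zero] using
    (summable_besselI0Term x).le_tsum 0 fun k _ ↦ besselI0Term_nonneg k x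

lemma half_le_besselI1 {x : ℝ} (hx : 0 ≤ x) : x / 2 ≤ besselI1 x := by
  rw [besselI1_eq_tsum]
  simpa [besselI1Term] using
    (summable_besselI1Term x).le_tsum 0 fun k _ ↦ besselI1Term_nonneg k hx

lemma besselI1_pos {x : ℝ} (hx : 0 < x) : 0 < besselI1 x :=
  (half_pos hx).trans_le (half_le_besselI1 hx.le)

lemma factorial_two_mul_le (k : ℕ) : (2 * k)! ≤ 4 ^ k * k ! * (k + 1)! := by
  have hsplit : (2 * k)! = k.centralBinom * k ! * k ! := by
    rw [Nat.centralBinom_eq_two_mul_choose,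
      ← Nat.choose_mul_factorial_mul_factorial (n := 2 * k) (k := k) (by omega),
      show 2 * k - k = k by omega]
  rw [hsplit]
  exact Nat.mul_le_mul (Nat.mul_le_mul_right _ (Nat.centralBinom_le_four_pow k))
    (Nat.factorial_le k.le_succ)

lemma besselI1_le_mul_cosh {x : ℝ} (hx : 0 ≤ x) : besselI1 x ≤ x / 2 * cosh x := by
  have hterm (k : ℕ) : besselI1Term k x ≤ x / 2 * (x ^ (2 * k) / (2 * k)!) := by
    have hfact : ((2 * k)! : ℝ) ≤ 4 ^ k * k ! * (k + 1)! := by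
      exact_mod_cast factorial_two_mul_le k
    calc besselI1Term k x = x / 2 * (x ^ (2 * k) / (4 ^ k * k ! * (k + 1)!)) := by
          rw [besselI1Term, div_pow, pow_succ, pow_succ (2 : ℝ), pow_mul (2 : ℝ)]
          field_simp
          norm_num
      _ ≤ x / 2 * (x ^ (2 * k) / (2 * k)!) := by gcongr
  rw [besselI1_eq_tsum, cosh_eq_tsum, ← tsum_mul_left]
  exact (summable_besselI1Term x).tsum_le_tsum hterm ((hasSum_cosh x).summable.mul_left _)

theorem tsum_lt_tsum_of_le_average_succ {E F : ℕ → ℝ} (hE : Summable E) (hF : Summable F)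
    (hE0 : E 0 ≤ 0) (hF0 : 0 < F 0) (h : ∀ k, E (k + 1) ≤ (F k + F (k + 1)) / 2) :
    ∑' k, E k < ∑' k, F k := by
  have hF' : Summable fun k ↦ F (k + 1) := (summable_nat_add_iff 1).2 hF
  have hshift := ((summable_nat_add_iff 1).2 hE).tsum_le_tsum h ((hF.add hF').div_const 2)
  rw [tsum_div_const, hF.tsum_add hF'] at hshift
  rw [hE.tsum_eq_zero_add, hF.tsum_eq_zero_add] at *
  linarith

lemma mul_besselI0_lt {x : ℝ} (hx : 0 < x) : x * besselI0 x < (x + 2) * besselI1 x := by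
  set E := fun k ↦ x * besselI0Term k x - 2 * besselI1Term k x
  set F := fun k ↦ x * besselI1Term k x
  have hE : Summable E := ((summable_besselI0Term x).mul_left x).sub
    ((summable_besselI1Term x).mul_left 2)
  have hF : Summable F := (summable_besselI1Term x).mul_left x
  have hstep (k : ℕ) : E (k + 1) ≤ (F k + F (k + 1)) / 2 := by
    have hk : (0 : ℝ) ≤ k := k.cast_nonneg
    have hgap : (F k + F (k + 1)) / 2 - E (k + 1) = besselI0Term k x * (x / 2) ^ 2 *
        ((x / 2 - (k + 1)) ^ 2 + (k + 1)) / ((k + 1) ^ 2 * (k + 2)) := by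
      simp only [E, F, besselI1Term_eq, besselI0Term_succ]
      push_cast
      field_simp
      ring
    have : 0 ≤ (F k + F (k + 1)) / 2 - E (k + 1) := by
      rw [hgap]
      have := besselI0Term_nonneg k x
      positivity
    linarith
  have hEsum : ∑' k, E k = x * besselI0 x - 2 * besselI1 x := by
    rw [((summable_besselI0Term x).mul_left x).tsum_sub ((summable_besselI1Term x).mul_left 2),
      tsum_mul_left, tsum_mul_left]
    rfl
  have hFsum : ∑' k, F k = x * besselI1 x := tsum_mul_left
  have hlt := tsum_lt_tsum_of_le_average_succ hE hF
    (by norm_num [E, besselI1Term_eq, besselI0Term_zero]; linarith)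
    (by simp only [F, besselI1Term_eq, besselI0Term_zero]; positivity) hstep
  rw [hEsum, hFsum] at hlt
  linarith

theorem pos_of_hasDerivAt_of_pos_at_zeros {f f' : ℝ → ℝ} {a : ℝ} (ha : 0 < f a)
    (hf : ∀ x, a ≤ x → HasDerivAt f (f' x) x) (hzero : ∀ x, a < x → f x = 0 → 0 < f' x)
    {x : ℝ} (hx : a ≤ x) : 0 < f x := by
  have hnonneg : ∀ y, a ≤ y → 0 ≤ f y := by
    intro y hy
    have hle := image_le_of_deriv_right_lt_deriv_boundary' (f := fun z ↦ -f z)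
      (f' := fun z ↦ -f' z) (B := 0) (B' := 0) (b := y)
      (fun z hz ↦ (hf z hz.1).continuousAt.continuousWithinAt.neg)
      (fun z hz ↦ (hf z hz.1).neg.hasDerivWithinAt) (by simpa using ha.le) continuousOn_const
      (fun z _ ↦ hasDerivWithinAt_const _ _ _)
      (fun z hz hfz ↦ by
        rcases hz.1.eq_or_lt with rfl | hlt
        · simp at hfz; linarith
        · simpa using hzero z hlt (by simpa using hfz)) ⟨hy, le_rfl⟩
    simpa using hle
  rcases hx.eq_or_lt with rfl | hlt
  · exact ha
  refine (hnonneg x hx).lt_of_ne fun hfx ↦ ?_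
  have hmin : IsLocalMin f x :=
    Filter.eventually_of_mem (Ioi_mem_nhds hlt) fun y hy ↦ hfx ▸ hnonneg y hy.le
  exact (hzero x hlt hfx.symm).ne' (hmin.hasDerivAt_eq_zero (hf x hx))

lemma mul_besselI1_lt_of_le_half {x : ℝ} (hx : 0 < x) (hx' : x ≤ 1 / 2) :
    (2 * x + 1) * besselI1 x < 2 * x * besselI0 x := by
  have hcosh : cosh x < 2 := by
    calc cosh x ≤ exp (x ^ 2 / 2) := cosh_le_exp_half_sq x
      _ < exp (log 2) := exp_lt_exp.2 (by nlinarith [log_two_gt_d9])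
      _ = 2 := exp_log two_pos
  have hfactor : (2 * x + 1) * cosh x < 4 := by nlinarith [cosh_pos x]
  calc (2 * x + 1) * besselI1 x ≤ (2 * x + 1) * (x / 2 * cosh x) := by
        gcongr; exact besselI1_le_mul_cosh hx.le
    _ = x / 2 * ((2 * x + 1) * cosh x) := by ring
    _ < x / 2 * 4 := by gcongr
    _ = 2 * x * 1 := by ring
    _ ≤ 2 * x * besselI0 x := by gcongr; exact one_le_besselI0 x

lemma mul_besselI1_lt {x : ℝ} (hx : 0 < x) : (2 * x + 1) * besselI1 x < 2 * x * besselI0 x := by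
  rcases le_or_gt x (1 / 2) with hx' | hx'
  · exact mul_besselI1_lt_of_le_half hx hx'
  set W := fun y ↦ 2 * y * besselI0 y - (2 * y + 1) * besselI1 y
  set W' := fun y ↦ (3 - 2 * y) * besselI0 y + (2 * y - 2) * besselI1 y - W y / y
  have hW (y : ℝ) (hy : 1 / 2 ≤ y) : HasDerivAt W (W' y) y := by
    have hy0 : y ≠ 0 := by positivity
    refine ((((hasDerivAt_id' y).const_mul 2).fun_mul (hasDerivAt_besselI0 y)).fun_sub
      ((((hasDerivAt_id' y).const_mul 2).add_const 1).fun_mul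
        (hasDerivAt_besselI1_of_ne_zero hy0))).congr_deriv ?_
    simp only [W, W']
    field_simp
    ring
  have hzero (y : ℝ) (_ : 1 / 2 < y) (hWy : W y = 0) : 0 < W' y := by
    have hI0 := one_le_besselI0 y
    have hkey : (2 * y + 1) * W' y = 3 * besselI0 y := by
      simp only [W'] at hWy ⊢
      rw [hWy]
      simp only [W] at hWy
      linear_combination (2 - 2 * y) * hWy
    nlinarith
  have := pos_of_hasDerivAt_of_pos_at_zeros (f := W)
    (by simpa [W] using mul_besselI1_lt_of_le_half one_half_pos le_rfl) hW hzero hx'.le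
  simp only [W] at this
  linarith

lemma deriv_besselI1_le {x : ℝ} (hx : 0 < x) : deriv besselI1 x ≤ besselI1 x + besselI1 x / x := by
  rw [(hasDerivAt_besselI1_of_ne_zero hx.ne').deriv, ← sub_nonneg]
  have hgap : besselI1 x + besselI1 x / x - (besselI0 x - besselI1 x / x) =
      ((x + 2) * besselI1 x - x * besselI0 x) / x := by
    field_simp
    ring
  rw [hgap]
  exact div_nonneg (by linarith [mul_besselI0_lt hx]) hx.le

lemma strictAntiOn_exp_neg_mul_besselI1_div :
    StrictAntiOn (fun x ↦ exp (-x) * besselI1 x / x) (Ioi 0) := by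
  have hderiv (x : ℝ) (hx : 0 < x) : HasDerivAt (fun x ↦ exp (-x) * besselI1 x / x)
      (exp (-x) * (x * besselI0 x - (x + 2) * besselI1 x) / x ^ 2) x := by
    refine (((hasDerivAt_neg' x).exp.fun_mul (hasDerivAt_besselI1_of_ne_zero hx.ne')).fun_div
      (hasDerivAt_id' x) hx.ne').congr_deriv ?_
    field_simp
    ring
  refine strictAntiOn_of_deriv_neg (convex_Ioi 0)
    (fun x hx ↦ (hderiv x hx).continuousAt.continuousWithinAt) fun x hx ↦ ?_
  rw [interior_Ioi, mem_Ioi] at hx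
  rw [(hderiv x hx).deriv]
  have := mul_besselI0_lt hx
  exact div_neg_of_neg_of_pos (mul_neg_of_pos_of_neg (exp_pos _) (by linarith)) (by positivity)

lemma strictMonoOn_exp_neg_mul_sqrt_mul_besselI1 :
    StrictMonoOn (fun x ↦ exp (-x) * (√x * besselI1 x)) (Ioi 0) := by
  have hderiv (x : ℝ) (hx : 0 < x) : HasDerivAt (fun x ↦ exp (-x) * (√x * besselI1 x))
      (exp (-x) * (2 * x * besselI0 x - (2 * x + 1) * besselI1 x) / (2 * √x)) x := by
    refine ((hasDerivAt_neg' x).exp.fun_mul ((hasDerivAt_sqrt hx.ne').fun_mul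
      (hasDerivAt_besselI1_of_ne_zero hx.ne'))).congr_deriv ?_
    have : 0 < √x := sqrt_pos.2 hx
    field_simp
    rw [sq_sqrt hx.le]
    ring
  refine strictMonoOn_of_deriv_pos (convex_Ioi 0)
    (fun x hx ↦ (hderiv x hx).continuousAt.continuousWithinAt) fun x hx ↦ ?_
  rw [interior_Ioi, mem_Ioi] at hx
  rw [(hderiv x hx).deriv]
  have := mul_besselI1_lt hx
  have := sqrt_pos.2 hx
  exact div_pos (mul_pos (exp_pos _) (by linarith)) (by positivity)

lemma exp_sub_mul_div_lt_besselI1_div {x y : ℝ} (hx : 0 < x) (hxy : x < y) :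
    exp (x - y) * (x / y) < besselI1 x / besselI1 y := by
  have hy : 0 < y := hx.trans hxy
  have hg := strictAntiOn_exp_neg_mul_besselI1_div (mem_Ioi.2 hx) (mem_Ioi.2 hy) hxy
  rw [lt_div_iff₀ (besselI1_pos hy)]
  calc exp (x - y) * (x / y) * besselI1 y = x * exp x * (exp (-y) * besselI1 y / y) := by
        rw [exp_sub, exp_neg]
        ring
    _ < x * exp x * (exp (-x) * besselI1 x / x) := by gcongr
    _ = besselI1 x := by
        rw [exp_neg]
        field_simp

lemma besselI1_div_lt_exp_sub_mul_sqrt {x y : ℝ} (hx : 0 < x) (hxy : x < y) :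
    besselI1 x / besselI1 y < exp (x - y) * √(y / x) := by
  have hy : 0 < y := hx.trans hxy
  have hh := strictMonoOn_exp_neg_mul_sqrt_mul_besselI1 (mem_Ioi.2 hx) (mem_Ioi.2 hy) hxy
  have : 0 < √x := sqrt_pos.2 hx
  rw [div_lt_iff₀ (besselI1_pos hy)]
  calc besselI1 x = exp x / √x * (exp (-x) * (√x * besselI1 x)) := by
        rw [exp_neg]
        field_simp
    _ < exp x / √x * (exp (-y) * (√y * besselI1 y)) := by gcongr
    _ = exp (x - y) * √(y / x) * besselI1 y := by
        rw [exp_sub, exp_neg, sqrt_div hy.le]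
        ring

theorem stmt_16 :
    (∀ x y : ℝ, 0 < x → x < y →
      Real.exp (x - y) * (x / y) < besselI1 x / besselI1 y
        ∧ besselI1 x / besselI1 y < Real.exp (x - y) * Real.sqrt (y / x))
    ∧ (∀ x : ℝ, 0 < x →
        x / 2 ≤ besselI1 x ∧ besselI1 x ≤ (x / 2) * Real.cosh x)
    ∧ (∀ x : ℝ, 0 < x →
        0 ≤ deriv besselI1 x
          ∧ deriv besselI1 x ≤ besselI1 x + besselI1 x / x) :=
  ⟨fun _ _ hx hxy ↦ ⟨exp_sub_mul_div_lt_besselI1_div hx hxy,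
      besselI1_div_lt_exp_sub_mul_sqrt hx hxy⟩,
    fun _ hx ↦ ⟨half_le_besselI1 hx.le, besselI1_le_mul_cosh hx.le⟩,
    fun x hx ↦ ⟨deriv_besselI1_nonneg x, deriv_besselI1_le hx⟩⟩
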